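/- Let S^R be the maximally permissive supervisor for the attacked closed-loop system G^R that is safe with respect to the resilient specification Ha and nonblocking. Then S^R is resilient with respect to Σ_{c,v} and G_robust if and only if for every detection state x_d ∈ X_det the post-attack state (A, x_d) belongs to the state set of S^R. -/

import Mathlib

/-!
Common formalization of supervisory control of DES under actuator-enablement
attacks, following the natural-language context.

* A plant is a DFA with partial transition function `f : X → E → Option X`
  and initial state `x0`; `runFrom` extends `f` to strings; `Lang f x0` is the
  generated language.
* A strict subautomaton of an automaton is represented by its state set
  `Q : Set X`, with induced transition function `subStep f Q`.
* Attacked events are modelled by the alphabet `E ⊕ E`: `Sum.inl e` is the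
  ordinary event `e`, `Sum.inr e` is the attacked copy `eᵃ` (meaningful for
  `e ∈ Scv`).
* The attacked plant `gaStep`, attacked supervisor `saStep` (state `none`
  playing the role of the fresh state `A`), and their synchronous composition
  `grStep` (the attacked closed-loop system `G^R = Sa ∥ Ga`) are defined below,
  together with detection states, robust-recovery, the resilient specification
  `Ha`, supervisors for `G^R`, and resilience.
-/

open Classical List

namespace RobustRec

variable {X : Type*} {E : Type*}

/-- Extension of a partial transition function to strings. -/
def runFrom (f : X → E → Option X) : X → List E → Option X
  | x, [] => some x
  | x, e :: w => (f x e).bind fun y => runFrom f y w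

/-- Language generated from state `x0`. -/
def Lang (f : X → E → Option X) (x0 : X) : Set (List E) :=
  {w | (runFrom f x0 w).isSome}

/-- Transition function of the strict (induced) subautomaton with state set `Q`:
a transition is defined iff it is defined in the big automaton and both its
endpoints lie in `Q`. -/
noncomputable def subStep (f : X → E → Option X) (Q : Set X) : X → E → Option X :=
  fun x e => (f x e).bind fun y => if x ∈ Q ∧ y ∈ Q then some y else none

/-- Vulnerable states: those where some vulnerable controllable event is feasible. -/
def vulnStates (f : X → E → Option X) (Scv : Set E) : Set X :=
  {x | ∃ e ∈ Scv, (f x e).isSome}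

/-- A supervisor for the plant `(f, x0)`, represented by its state set `XS`
(the induced strict subautomaton): it contains `x0`, is controllable w.r.t.
the uncontrollable events `Suc`, and is safe w.r.t. the unsafe states `XUS`. -/
structure IsSupervisor (f : X → E → Option X) (x0 : X) (Suc : Set E)
    (XUS : Set X) (XS : Set X) : Prop where
  init_mem : x0 ∈ XS
  controllable : ∀ x ∈ XS, ∀ e ∈ Suc, ∀ y, f x e = some y → y ∈ XS
  safe : ∀ x ∈ XS, x ∉ XUS

/-- The attacked plant `Ga`: all transitions of `G`, plus, for every transition
on a vulnerable event `σ ∈ Scv`, a parallel transition on its attacked copy. -/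
noncomputable def gaStep (f : X → E → Option X) (Scv : Set E) :
    X → E ⊕ E → Option X
  | x, Sum.inl e => f x e
  | x, Sum.inr e => if e ∈ Scv then f x e else none

/-- The attacked supervisor `Sa`: states are `some x` for states `x` of `S`
plus the fresh state `A = none` with a self-loop on every event; for every
state `x` of `S` and `σ ∈ Scv` with `f_S(x,σ)` undefined there is a transition
on `σᵃ` from `x` to `A`. -/
noncomputable def saStep (f : X → E → Option X) (XS : Set X) (Scv : Set E) :
    Option X → E ⊕ E → Option (Option X)
  | none, _ => some none
  | some x, Sum.inl e => (subStep f XS x e).map some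
  | some x, Sum.inr e =>
      if e ∈ Scv ∧ x ∈ XS ∧ subStep f XS x e = none then some none else none

/-- Synchronous composition of two automata over a common alphabet. -/
def prodStep {X1 X2 A : Type*} (f1 : X1 → A → Option X1) (f2 : X2 → A → Option X2) :
    X1 × X2 → A → Option (X1 × X2) :=
  fun p a => (f1 p.1 a).bind fun y1 => (f2 p.2 a).map fun y2 => (y1, y2)

/-- The attacked closed-loop system `G^R = Sa ∥ Ga`. Its post-attack states are
those of the form `(none, x)`, i.e. `(A, x)`. -/
noncomputable def grStep (f : X → E → Option X) (XS : Set X) (Scv : Set E) :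
    Option X × X → E ⊕ E → Option (Option X × X) :=
  prodStep (saStep f XS Scv) (gaStep f Scv)

/-- Initial state of `G^R`. -/
def grInit (x0 : X) : Option X × X := (some x0, x0)

/-- Embedding of strings over `Σ` into strings over `Σ ∪ Σᵃ_{c,v}`. -/
def embed : List E → List (E ⊕ E) := List.map Sum.inl

/-- The language `L(Sa/Ga)` of the attacked closed-loop system. -/
noncomputable def GRLang (f : X → E → Option X) (x0 : X) (XS : Set X) (Scv : Set E) :
    Set (List (E ⊕ E)) :=
  Lang (grStep f XS Scv) (grInit x0)

/-- The detection language `L_det = {sσ ∈ L(G) | s ∈ L(S/G), σ ∈ Σ_{c,v},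
sσᵃ ∈ L(Sa/Ga)}`. -/
noncomputable def detLang (f : X → E → Option X) (x0 : X) (XS : Set X) (Scv : Set E) :
    Set (List E) :=
  {w | ∃ s σ, w = s ++ [σ] ∧ σ ∈ Scv ∧ w ∈ Lang f x0 ∧
        s ∈ Lang (subStep f XS) x0 ∧ embed s ++ [Sum.inr σ] ∈ GRLang f x0 XS Scv}

/-- The detection states `X_det = {f(x0, sσ) : sσ ∈ L_det}`. -/
noncomputable def detStates (f : X → E → Option X) (x0 : X) (XS : Set X) (Scv : Set E) :
    Set X :=
  {x | ∃ w ∈ detLang f x0 XS Scv, runFrom f x0 w = some x}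

/-- `r` is a robust-recovery strategy from `x` relative to the candidate set `R`
of recoverable states, the robust region `XR` and the bad states
`Bad = X_v ∪ X_US`: (1) `r` leads into `XR`; (2) no prefix of `r` visits `Bad`;
(3) no prefix of `r` can uncontrollably reach `Bad`; (4) any one-step
uncontrollable deviation from `r` lands in `R`. -/
def IsRecoveryPath (f : X → E → Option X) (Suc : Set E) (XR Bad : Set X)
    (R : Set X) (x : X) (r : List E) : Prop :=
  (∃ y ∈ XR, runFrom f x r = some y) ∧
  (∀ t, t <+: r → ∀ y, runFrom f x t = some y → y ∉ Bad) ∧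
  (∀ t, t <+: r → ∀ u : List E, (∀ e ∈ u, e ∈ Suc) →
      ∀ y, runFrom f x (t ++ u) = some y → y ∉ Bad) ∧
  (∀ t, t <+: r → ∀ e ∈ Suc, ∀ y, runFrom f x (t ++ [e]) = some y →
      ¬ (t ++ [e]) <+: r → y ∈ R)

/-- The set `R` of AE-robust recoverable states: the largest subset of
`X \ Bad` each of whose elements admits a robust-recovery strategy (relative
to the set itself). -/
def recSet (f : X → E → Option X) (Suc : Set E) (XR Bad : Set X) : Set X :=
  ⋃₀ {R | R ⊆ Badᶜ ∧ ∀ x ∈ R, ∃ r, IsRecoveryPath f Suc XR Bad R x r}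

/-- The attacked system `Sa/Ga` is AE-robust recoverable w.r.t. the robust
region `XR` if every detection state is AE-robust recoverable. -/
noncomputable def AERobustRecoverable (f : X → E → Option X) (x0 : X)
    (Suc Scv : Set E) (XUS XS XR : Set X) : Prop :=
  detStates f x0 XS Scv ⊆ recSet f Suc XR (vulnStates f Scv ∪ XUS)

/-- Reachable states of `G^R` (the state set of the synchronous composition). -/
noncomputable def grStates (f : X → E → Option X) (x0 : X) (XS : Set X) (Scv : Set E) :
    Set (Option X × X) :=
  {p | ∃ w, runFrom (grStep f XS Scv) (grInit x0) w = some p}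

/-- A supervisor for `G^R`, represented by its state set `Q` (inducing a strict
subautomaton of `G^R`): it contains the initial state and is controllable
w.r.t. `Suc` (attacked events being controllable). -/
structure IsGRSupervisor (f : X → E → Option X) (x0 : X) (Suc Scv : Set E)
    (XS : Set X) (Q : Set (Option X × X)) : Prop where
  subset : Q ⊆ grStates f x0 XS Scv
  init_mem : grInit x0 ∈ Q
  controllable : ∀ p ∈ Q, ∀ e ∈ Suc, ∀ q, grStep f XS Scv p (Sum.inl e) = some q → q ∈ Q

/-- State set of the resilient specification `Ha`: `G^R` minus every post-attack
state `(A, x)` with `x ∈ X_v ∪ X_US`. -/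
def haCarrier (f : X → E → Option X) (Scv : Set E) (XUS : Set X) :
    Set (Option X × X) :=
  {p | ¬ (p.1 = none ∧ p.2 ∈ vulnStates f Scv ∪ XUS)}

/-- Marked states of `Ha`: post-attack states `(A, x)` with `x` in the robust
region. -/
def haMarked (XR : Set X) : Set (Option X × X) :=
  {p | p.1 = (none : Option X) ∧ p.2 ∈ XR}

/-- The closed-loop language `L(S^R/G^R) = L(S^R)` of a supervisor `Q` for `G^R`. -/
noncomputable def SRLang (f : X → E → Option X) (x0 : X) (XS : Set X) (Scv : Set E)
    (Q : Set (Option X × X)) : Set (List (E ⊕ E)) :=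
  Lang (subStep (grStep f XS Scv) Q) (grInit x0)

/-- `S^R` is safe w.r.t. the resilient specification `Ha`: `L(S^R) ⊆ L(Ha)`. -/
noncomputable def SafeWrtHa (f : X → E → Option X) (x0 : X) (XS : Set X)
    (Scv : Set E) (XUS : Set X) (Q : Set (Option X × X)) : Prop :=
  SRLang f x0 XS Scv Q ⊆
    Lang (subStep (grStep f XS Scv) (haCarrier f Scv XUS)) (grInit x0)

/-- `S^R` is nonblocking: from every post-attack state of `S^R`, a marked state
of `Ha` is reachable within `S^R`. -/
noncomputable def NonblockingSR (f : X → E → Option X) (XS : Set X) (Scv : Set E)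
    (XR : Set X) (Q : Set (Option X × X)) : Prop :=
  ∀ p ∈ Q, p.1 = (none : Option X) →
    ∃ w q, runFrom (subStep (grStep f XS Scv) Q) p w = some q ∧ q ∈ haMarked XR

/-- `S^R` is maximally permissive among safe nonblocking supervisors for `G^R`. -/
noncomputable def MaxPermissive (f : X → E → Option X) (x0 : X) (Suc Scv : Set E)
    (XS XUS XR : Set X) (Q : Set (Option X × X)) : Prop :=
  ∀ Q', IsGRSupervisor f x0 Suc Scv XS Q' → SafeWrtHa f x0 XS Scv XUS Q' →
    NonblockingSR f XS Scv XR Q' → SRLang f x0 XS Scv Q' ⊆ SRLang f x0 XS Scv Q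

/-- `S^R` (given by its state set `Q`) is resilient w.r.t. `Scv` and the robust
region `XR`: it permits the full nominal behavior `L(S/G)`, and after any
AE-attack `sσᵃ` feasible in `L(Sa/Ga)` it permits the attack, keeps all its
subsequent behavior out of `Bad = X_v ∪ X_US`, and can always be extended
within `L(S^R)` to reach a post-attack state `(A, x)` with `x ∈ XR`; i.e. it
enforces a robust-recovery strategy from the detection state. -/
noncomputable def ResilientSup (f : X → E → Option X) (x0 : X) (Scv : Set E)
    (XS XR Bad : Set X) (Q : Set (Option X × X)) : Prop :=
  (∀ s ∈ Lang (subStep f XS) x0, embed s ∈ SRLang f x0 XS Scv Q) ∧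
  ∀ s : List E, embed s ∈ SRLang f x0 XS Scv Q →
    ∀ σ ∈ Scv, embed s ++ [Sum.inr σ] ∈ GRLang f x0 XS Scv →
      embed s ++ [Sum.inr σ] ∈ SRLang f x0 XS Scv Q ∧
      ∀ t : List E, embed s ++ [Sum.inr σ] ++ embed t ∈ SRLang f x0 XS Scv Q →
        (∀ t', t' <+: t → ∀ y, runFrom f x0 (s ++ σ :: t') = some y →
            y ∉ Bad) ∧
        ∃ u q, runFrom (subStep (grStep f XS Scv) Q) (grInit x0)
                 (embed s ++ [Sum.inr σ] ++ embed t ++ u) = some q ∧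
               q.1 = (none : Option X) ∧ q.2 ∈ XR

/-- A prefix-closed language. -/
def PrefixClosed (K : Set (List E)) : Prop := ∀ s t : List E, s ++ t ∈ K → s ∈ K

/-- `K` is controllable w.r.t. the language `M` and uncontrollable events `Suc`. -/
def ControllableLang (K M : Set (List E)) (Suc : Set E) : Prop :=
  ∀ s ∈ K, ∀ e ∈ Suc, s ++ [e] ∈ M → s ++ [e] ∈ K

/-- The supremal controllable (prefix-closed) sublanguage of `M` w.r.t. `LG`. -/
def supC (M LG : Set (List E)) (Suc : Set E) : Set (List E) :=
  ⋃₀ {K | K ⊆ M ∧ PrefixClosed K ∧ ControllableLang K LG Suc}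

end RobustRec

/-!
From a nominal state `(x, x)` an attack `σᵃ` moves `G^R` to `(A, f(x, σ))`, and the detection
states are exactly the states `f(x, σ)` reached this way. So if `S^R` contains every `(A, x_d)`
it permits every attack, and safety w.r.t. `Ha` and nonblocking give the two recovery
requirements. It permits `L(S/G)` because the copy of `S` inside `G^R` has no post-attack state,
hence is a safe and vacuously nonblocking supervisor, whose language maximal permissiveness puts
inside `L(S^R)`. Conversely, a resilient `S^R` permits every attack, so it contains every
`(A, x_d)`.
-/

namespace RobustRec

variable {X E : Type*}

section Automaton

variable {f : X → E → Option X} {Q : Set X}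

theorem runFrom_append (f : X → E → Option X) (x : X) (a b : List E) :
    runFrom f x (a ++ b) = (runFrom f x a).bind fun y => runFrom f y b := by
  induction a generalizing x with
  | nil => rfl
  | cons e a ih =>
      simp only [List.cons_append, runFrom]
      cases f x e <;> simp [ih]

theorem runFrom_singleton (f : X → E → Option X) (x : X) (e : E) :
    runFrom f x [e] = f x e := by
  simp [runFrom]

theorem exists_runFrom_of_runFrom_append {x y : X} {a b : List E}
    (h : runFrom f x (a ++ b) = some y) :
    ∃ z, runFrom f x a = some z ∧ runFrom f z b = some y := by
  rwa [runFrom_append, Option.bind_eq_some_iff] at h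

theorem subStep_eq_some {x y : X} {e : E} :
    subStep f Q x e = some y ↔ f x e = some y ∧ x ∈ Q ∧ y ∈ Q := by
  simp only [subStep, Option.bind_eq_some_iff, Option.ite_none_right_eq_some, Option.some.injEq]
  constructor
  · rintro ⟨z, hz, hQ, rfl⟩
    exact ⟨hz, hQ⟩
  · rintro ⟨hy, hQ⟩
    exact ⟨y, hy, hQ, rfl⟩

theorem runFrom_of_runFrom_subStep {x y : X} {w : List E}
    (h : runFrom (subStep f Q) x w = some y) : runFrom f x w = some y := by
  induction w generalizing x with
  | nil => exact h
  | cons e w ih =>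
      simp only [runFrom, Option.bind_eq_some_iff] at h ⊢
      obtain ⟨z, hz, h⟩ := h
      exact ⟨z, (subStep_eq_some.mp hz).1, ih h⟩

theorem mem_of_runFrom_subStep {x y : X} {w : List E} (hx : x ∈ Q)
    (h : runFrom (subStep f Q) x w = some y) : y ∈ Q := by
  induction w generalizing x with
  | nil => exact Option.some.inj h ▸ hx
  | cons e w ih =>
      simp only [runFrom, Option.bind_eq_some_iff] at h
      obtain ⟨z, hz, h⟩ := h
      exact ih (subStep_eq_some.mp hz).2.2 h

theorem runFrom_subStep_append_singleton {x y z : X} {w : List E} {e : E} (hx : x ∈ Q)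
    (hw : runFrom (subStep f Q) x w = some y) (hwe : runFrom f x (w ++ [e]) = some z)
    (hz : z ∈ Q) : runFrom (subStep f Q) x (w ++ [e]) = some z := by
  rw [runFrom_append, runFrom_of_runFrom_subStep hw, Option.bind_some,
    runFrom_singleton] at hwe
  rw [runFrom_append, hw, Option.bind_some, runFrom_singleton]
  exact subStep_eq_some.mpr ⟨hwe, mem_of_runFrom_subStep hx hw, hz⟩

theorem runFrom_subStep_of_subset {Q' : Set X} (hQ : Q ⊆ Q') {x y : X} {w : List E}
    (hx : x ∈ Q') (h : runFrom (subStep f Q) x w = some y) :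
    runFrom (subStep f Q') x w = some y := by
  induction w generalizing x with
  | nil => exact h
  | cons e w ih =>
      simp only [runFrom, Option.bind_eq_some_iff] at h ⊢
      obtain ⟨z, hz, h⟩ := h
      obtain ⟨hf, -, hzQ⟩ := subStep_eq_some.mp hz
      exact ⟨z, subStep_eq_some.mpr ⟨hf, hx, hQ hzQ⟩, ih (hQ hzQ) h⟩

end Automaton

section AttackedSystem

theorem embed_append (a b : List E) : embed (a ++ b) = embed a ++ embed b :=
  List.map_append

variable (f : X → E → Option X) (XS : Set X) (Scv : Set E)

theorem grStep_some_inl (x : X) (e : E) :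
    grStep f XS Scv (some x, x) (Sum.inl e) = (subStep f XS x e).map fun y => (some y, y) := by
  rcases hy : subStep f XS x e with _ | y
  · simp [grStep, prodStep, saStep, hy]
  · simp [grStep, prodStep, saStep, gaStep, hy, (subStep_eq_some.mp hy).1]

theorem grStep_none_inl (x : X) (e : E) :
    grStep f XS Scv (none, x) (Sum.inl e) = (f x e).map fun y => (none, y) := by
  simp [grStep, prodStep, saStep, gaStep]

theorem grStep_some_inr (x : X) (σ : E) :
    grStep f XS Scv (some x, x) (Sum.inr σ) =
      if σ ∈ Scv ∧ x ∈ XS ∧ subStep f XS x σ = none then (f x σ).map fun y => (none, y)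
      else none := by
  split_ifs with hc <;> simp [grStep, prodStep, saStep, gaStep, hc]

theorem runFrom_grStep_some_embed (x : X) (s : List E) :
    runFrom (grStep f XS Scv) (some x, x) (embed s) =
      (runFrom (subStep f XS) x s).map fun y => (some y, y) := by
  induction s generalizing x with
  | nil => rfl
  | cons e s ih =>
      simp only [embed, List.map_cons, runFrom, grStep_some_inl] at ih ⊢
      cases subStep f XS x e <;> simp [ih]

theorem runFrom_grStep_none_embed (x : X) (s : List E) :
    runFrom (grStep f XS Scv) (none, x) (embed s) = (runFrom f x s).map fun y => (none, y) := by
  induction s generalizing x with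
  | nil => rfl
  | cons e s ih =>
      simp only [embed, List.map_cons, runFrom, grStep_none_inl] at ih ⊢
      cases f x e <;> simp [ih]

variable {f XS Scv} {x0 : X}

theorem runFrom_grStep_attack {s : List E} {σ : E} {p : Option X × X}
    (h : runFrom (grStep f XS Scv) (grInit x0) (embed s ++ [Sum.inr σ]) = some p) :
    ∃ xd ∈ detStates f x0 XS Scv, p = (none, xd) ∧ runFrom f x0 (s ++ [σ]) = some xd := by
  obtain ⟨q, hq, hstep⟩ := exists_runFrom_of_runFrom_append h
  rw [grInit, runFrom_grStep_some_embed, Option.map_eq_some_iff] at hq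
  obtain ⟨y, hy, rfl⟩ := hq
  rw [runFrom_singleton, grStep_some_inr] at hstep
  split_ifs at hstep with hc
  obtain ⟨xd, hxd, rfl⟩ := Option.map_eq_some_iff.mp hstep
  have hrun : runFrom f x0 (s ++ [σ]) = some xd := by
    rw [runFrom_append, runFrom_of_runFrom_subStep hy, Option.bind_some, runFrom_singleton, hxd]
  exact ⟨xd, ⟨s ++ [σ], ⟨s, σ, rfl, hc.1, Option.isSome_iff_exists.mpr ⟨xd, hrun⟩,
    Option.isSome_iff_exists.mpr ⟨y, hy⟩, Option.isSome_iff_exists.mpr ⟨_, h⟩⟩, hrun⟩, rfl, hrun⟩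

theorem runFrom_grStep_attack_append {s t : List E} {σ : E} {p : Option X × X}
    (h : runFrom (grStep f XS Scv) (grInit x0) (embed s ++ [Sum.inr σ] ++ embed t) = some p) :
    ∃ z, p = (none, z) ∧ runFrom f x0 (s ++ σ :: t) = some z := by
  obtain ⟨q, hq, ht⟩ := exists_runFrom_of_runFrom_append h
  obtain ⟨xd, -, rfl, hxd⟩ := runFrom_grStep_attack hq
  rw [runFrom_grStep_none_embed, Option.map_eq_some_iff] at ht
  obtain ⟨z, hz, rfl⟩ := ht
  refine ⟨z, rfl, ?_⟩
  rw [← List.singleton_append, ← List.append_assoc, runFrom_append, hxd, Option.bind_some, hz]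

end AttackedSystem

section Supervisors

variable {f : X → E → Option X} {x0 : X} {Suc Scv : Set E} {XS XUS XR : Set X}
  {Q : Set (Option X × X)}

theorem SafeWrtHa.not_mem_of_runFrom (hsafe : SafeWrtHa f x0 XS Scv XUS Q) {w : List (E ⊕ E)}
    {z : X} (h : runFrom (subStep (grStep f XS Scv) Q) (grInit x0) w = some (none, z)) :
    z ∉ vulnStates f Scv ∪ XUS := by
  obtain ⟨m, hm⟩ := Option.isSome_iff_exists.mp (hsafe (Option.isSome_iff_exists.mpr ⟨_, h⟩))
  have hmz : m = (none, z) :=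
    Option.some.inj ((runFrom_of_runFrom_subStep hm).symm.trans (runFrom_of_runFrom_subStep h))
  have hmHa : m ∈ haCarrier f Scv XUS :=
    mem_of_runFrom_subStep (by simp [haCarrier, grInit]) hm
  subst hmz
  exact fun hbad => hmHa ⟨rfl, hbad⟩

theorem NonblockingSR.exists_marked_extension (hnb : NonblockingSR f XS Scv XR Q)
    {x p : Option X × X} {w : List (E ⊕ E)} (hx : x ∈ Q)
    (h : runFrom (subStep (grStep f XS Scv) Q) x w = some p) (hp : p.1 = none) :
    ∃ u q, runFrom (subStep (grStep f XS Scv) Q) x (w ++ u) = some q ∧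
      q.1 = none ∧ q.2 ∈ XR := by
  obtain ⟨u, q, hq, hq1, hq2⟩ := hnb p (mem_of_runFrom_subStep hx h) hp
  exact ⟨u, q, by rw [runFrom_append, h, Option.bind_some, hq], hq1, hq2⟩

variable (f x0 XS) in
def nominalSup : Set (Option X × X) :=
  (fun y => (some y, y)) '' {y | ∃ s, runFrom (subStep f XS) x0 s = some y}

theorem isGRSupervisor_nominalSup : IsGRSupervisor f x0 Suc Scv XS (nominalSup f x0 XS) where
  subset := by
    rintro _ ⟨y, ⟨s, hs⟩, rfl⟩
    exact ⟨embed s, by rw [grInit, runFrom_grStep_some_embed, hs]; rfl⟩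
  init_mem := ⟨x0, ⟨[], rfl⟩, rfl⟩
  controllable := by
    rintro _ ⟨y, ⟨s, hs⟩, rfl⟩ e - q hq
    rw [grStep_some_inl, Option.map_eq_some_iff] at hq
    obtain ⟨z, hz, rfl⟩ := hq
    exact ⟨z, ⟨s ++ [e], by rw [runFrom_append, hs, Option.bind_some, runFrom_singleton, hz]⟩, rfl⟩

theorem safeWrtHa_nominalSup : SafeWrtHa f x0 XS Scv XUS (nominalSup f x0 XS) := by
  intro w hw
  obtain ⟨p, hp⟩ := Option.isSome_iff_exists.mp hw
  have hsub : nominalSup f x0 XS ⊆ haCarrier f Scv XUS := by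
    rintro _ ⟨y, -, rfl⟩
    simp [haCarrier]
  exact Option.isSome_iff_exists.mpr
    ⟨p, runFrom_subStep_of_subset hsub (by simp [haCarrier, grInit]) hp⟩

theorem nonblockingSR_nominalSup : NonblockingSR f XS Scv XR (nominalSup f x0 XS) := by
  rintro _ ⟨y, -, rfl⟩ h
  cases h

theorem runFrom_subStep_nominalSup {x y : X} {s : List E}
    (hx : ∃ s0, runFrom (subStep f XS) x0 s0 = some x)
    (h : runFrom (subStep f XS) x s = some y) :
    runFrom (subStep (grStep f XS Scv) (nominalSup f x0 XS)) (some x, x) (embed s) =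
      some (some y, y) := by
  induction s generalizing x with
  | nil => exact congrArg (fun y => some (some y, y)) (Option.some.inj h)
  | cons e s ih =>
      simp only [runFrom, Option.bind_eq_some_iff] at h
      obtain ⟨z, hz, h⟩ := h
      obtain ⟨s0, hs0⟩ := hx
      have hz0 : runFrom (subStep f XS) x0 (s0 ++ [e]) = some z := by
        rw [runFrom_append, hs0, Option.bind_some, runFrom_singleton, hz]
      have hstep : subStep (grStep f XS Scv) (nominalSup f x0 XS) (some x, x) (Sum.inl e) =
          some (some z, z) :=
        subStep_eq_some.mpr ⟨by rw [grStep_some_inl, hz]; rfl,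
          ⟨x, ⟨s0, hs0⟩, rfl⟩, ⟨z, ⟨s0 ++ [e], hz0⟩, rfl⟩⟩
      simp only [embed, List.map_cons, runFrom, hstep, Option.bind_some]
      exact ih ⟨s0 ++ [e], hz0⟩ h

theorem MaxPermissive.embed_mem_SRLang (hmax : MaxPermissive f x0 Suc Scv XS XUS XR Q)
    {s : List E} (hs : s ∈ Lang (subStep f XS) x0) : embed s ∈ SRLang f x0 XS Scv Q := by
  obtain ⟨y, hy⟩ := Option.isSome_iff_exists.mp hs
  refine hmax _ isGRSupervisor_nominalSup safeWrtHa_nominalSup nonblockingSR_nominalSup ?_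
  exact Option.isSome_iff_exists.mpr ⟨_, runFrom_subStep_nominalSup ⟨[], rfl⟩ hy⟩

theorem ResilientSup.mem_of_mem_detStates
    (hres : ResilientSup f x0 Scv XS XR (vulnStates f Scv ∪ XUS) Q) (hinit : grInit x0 ∈ Q)
    {x : X} (hx : x ∈ detStates f x0 XS Scv) : (none, x) ∈ Q := by
  obtain ⟨_, ⟨s, σ, rfl, hσ, -, hs, hga⟩, hx⟩ := hx
  obtain ⟨p, hp⟩ := Option.isSome_iff_exists.mp (hres.2 s (hres.1 s hs) σ hσ hga).1
  obtain ⟨xd, -, rfl, hxd⟩ := runFrom_grStep_attack (runFrom_of_runFrom_subStep hp)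
  obtain rfl : xd = x := Option.some.inj (hxd.symm.trans hx)
  exact mem_of_runFrom_subStep hinit hp

theorem runFrom_subStep_attack (hinit : grInit x0 ∈ Q)
    (hdet : ∀ x ∈ detStates f x0 XS Scv, (none, x) ∈ Q) {s : List E} {σ : E}
    {q p : Option X × X}
    (hs : runFrom (subStep (grStep f XS Scv) Q) (grInit x0) (embed s) = some q)
    (hga : runFrom (grStep f XS Scv) (grInit x0) (embed s ++ [Sum.inr σ]) = some p) :
    runFrom (subStep (grStep f XS Scv) Q) (grInit x0) (embed s ++ [Sum.inr σ]) = some p := by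
  obtain ⟨xd, hxd, rfl, -⟩ := runFrom_grStep_attack hga
  exact runFrom_subStep_append_singleton hinit hs hga (hdet xd hxd)

theorem resilientSup_of_detStates_mem (hinit : grInit x0 ∈ Q)
    (hsafe : SafeWrtHa f x0 XS Scv XUS Q) (hnb : NonblockingSR f XS Scv XR Q)
    (hmax : MaxPermissive f x0 Suc Scv XS XUS XR Q)
    (hdet : ∀ x ∈ detStates f x0 XS Scv, (none, x) ∈ Q) :
    ResilientSup f x0 Scv XS XR (vulnStates f Scv ∪ XUS) Q := by
  refine ⟨fun s hs => hmax.embed_mem_SRLang hs, fun s hs σ _ hga => ?_⟩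
  obtain ⟨q, hq⟩ := Option.isSome_iff_exists.mp hs
  obtain ⟨p, hp⟩ := Option.isSome_iff_exists.mp hga
  have hattack := runFrom_subStep_attack hinit hdet hq hp
  refine ⟨Option.isSome_iff_exists.mpr ⟨p, hattack⟩, fun t ht => ?_⟩
  obtain ⟨p', hp'⟩ := Option.isSome_iff_exists.mp ht
  constructor
  · rintro t' ⟨t'', rfl⟩ y hy
    rw [embed_append, ← List.append_assoc] at hp'
    obtain ⟨m, hm, -⟩ := exists_runFrom_of_runFrom_append hp'
    obtain ⟨z, rfl, hz⟩ := runFrom_grStep_attack_append (runFrom_of_runFrom_subStep hm)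
    obtain rfl : z = y := Option.some.inj (hz.symm.trans hy)
    exact hsafe.not_mem_of_runFrom hm
  · obtain ⟨z, rfl, -⟩ := runFrom_grStep_attack_append (runFrom_of_runFrom_subStep hp')
    exact hnb.exists_marked_extension hinit hp' rfl

end Supervisors

end RobustRec

theorem RobustRec.resilient_iff_detStates_mem_general
    {X E : Type*}
    (f : X → E → Option X) (x0 : X) (Suc Scv : Set E) (XUS XS XR : Set X)
    (Q : Set (Option X × X))
    (hQ : IsGRSupervisor f x0 Suc Scv XS Q)
    (hsafe : SafeWrtHa f x0 XS Scv XUS Q)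
    (hnb : NonblockingSR f XS Scv XR Q)
    (hmax : MaxPermissive f x0 Suc Scv XS XUS XR Q) :
    ResilientSup f x0 Scv XS XR (vulnStates f Scv ∪ XUS) Q ↔
      ∀ x ∈ detStates f x0 XS Scv, ((none : Option X), x) ∈ Q :=
  ⟨fun hres _ hx => hres.mem_of_mem_detStates hQ.init_mem hx,
    resilientSup_of_detStates_mem hQ.init_mem hsafe hnb hmax⟩

/-- Theorem 1 of the paper. Let `S^R` (state set `Q`) be the
maximally permissive supervisor for the attacked closed-loop system `G^R` that
is safe w.r.t. the resilient specification `Ha` and nonblocking. Then `S^R` is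
resilient w.r.t. `Σ_{c,v}` and `G_robust` iff for every detection state
`x_d ∈ X_det` the post-attack state `(A, x_d)` belongs to the state set of `S^R`. -/
theorem RobustRec.resilient_iff_detStates_mem
    {X E : Type*} [Fintype X] [Fintype E]
    (f : X → E → Option X) (x0 : X) (Sc Suc Scv : Set E) (XUS XS XR : Set X)
    (hdisj : Sc ∩ Suc = ∅) (hcover : Sc ∪ Suc = Set.univ) (hScv : Scv ⊆ Sc)
    (hS : IsSupervisor f x0 Suc XUS XS)
    (hXR : XR ∩ (vulnStates f Scv ∪ XUS) = ∅)
    (Q : Set (Option X × X))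
    (hQ : IsGRSupervisor f x0 Suc Scv XS Q)
    (hsafe : SafeWrtHa f x0 XS Scv XUS Q)
    (hnb : NonblockingSR f XS Scv XR Q)
    (hmax : MaxPermissive f x0 Suc Scv XS XUS XR Q) :
    ResilientSup f x0 Scv XS XR (vulnStates f Scv ∪ XUS) Q ↔
      ∀ x ∈ detStates f x0 XS Scv, ((none : Option X), x) ∈ Q :=
  RobustRec.resilient_iff_detStates_mem_general f x0 Suc Scv XUS XS XR Q hQ hsafe hnb hmax
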